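/- arXiv:2508.07036 — 3 statements merged into one kernel-verified Lean document; each statement's English description precedes it below -/
import Mathlib

section
/- Let a < b be reals, let ω be a weight function on [a,b], let m ≥ 1 and N ≥ 3 be integers, and let π_m be an m-th orthogonal polynomial with respect to ω on [a,b]; assume π_m(a) ≠ 0 and π_m(b) ≠ 0. Then (π_m(b)/π_m(a))^N ≠ 1 if and only if the following unisolvence property holds: whenever f_1, …, f_N are real polynomials of degree at most m such that ∫_a^b f_i(x) q(x) ω(x) dx = 0 for every i = 1, …, N and every polynomial q of degree at most m−1, and the cyclic matching conditions f_i(b) = f_{i+1}(a) for i = 1, …, N−1 and f_N(b) = f_1(a) hold, then f_1 = ⋯ = f_N = 0. -/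
/-!
A polynomial of degree `≤ m` that is `ω`-orthogonal to all polynomials of degree `< m` is a
multiple `c • π_m`, because the weighted inner product is definite on polynomials. Hence every
edge polynomial satisfies `f_i(b) = r f_i(a)` with `r = π_m(b) / π_m(a)`, the matching
conditions give `f_{i+1}(a) = r f_i(a)`, and going once around the cycle gives
`f_1(a) = r^N f_1(a)`. If `r^N ≠ 1` all `f_i(a)`, hence all `c_i`, vanish; if `r^N = 1`, then
`f_i = r^(i-1) • π_m` is a nonzero solution.
-/

open MeasureTheory Polynomial

section WeightedIntegral

variable {a b : ℝ} {μ : Measure ℝ} {ω : ℝ → ℝ}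

lemma Polynomial.intervalIntegrable_eval_mul
    (hω_mom : ∀ n : ℕ, IntervalIntegrable (fun x => x ^ n * ω x) μ a b) (p : ℝ[X]) :
    IntervalIntegrable (fun x => p.eval x * ω x) μ a b := by
  induction p using Polynomial.induction_on' with
  | add p q hp hq => simpa only [eval_add, add_mul] using hp.add hq
  | monomial n c => simpa only [eval_monomial, mul_assoc] using (hω_mom n).const_mul c

/-- `g² ω` vanishes a.e. on `[a, b]`, and a nonzero `g` has only finitely many roots,
so `ω` would vanish a.e. there. -/
lemma Polynomial.eq_zero_of_integral_eval_mul_self_mul_eq_zero [NullSingletonClass μ]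
    (hab : a ≤ b)
    (hω_nonneg : ∀ x ∈ Set.Icc a b, 0 ≤ ω x)
    (hω_mom : ∀ n : ℕ, IntervalIntegrable (fun x => x ^ n * ω x) μ a b)
    (hω_ne : ∫ x in a..b, ω x ∂μ ≠ 0) {g : ℝ[X]}
    (hg : ∫ x in a..b, g.eval x * g.eval x * ω x ∂μ = 0) : g = 0 := by
  by_contra hg_ne
  refine hω_ne (intervalIntegral.integral_zero_ae ?_)
  have hint : IntervalIntegrable (fun x => g.eval x * g.eval x * ω x) μ a b := by
    simpa only [eval_mul, mul_assoc] using intervalIntegrable_eval_mul hω_mom (g * g)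
  have hnonneg : 0 ≤ᵐ[μ.restrict (Set.Ioc a b)] fun x => g.eval x * g.eval x * ω x :=
    (ae_restrict_iff' measurableSet_Ioc).2 <| .of_forall fun x hx =>
      mul_nonneg (mul_self_nonneg _) (hω_nonneg x (Set.Ioc_subset_Icc_self hx))
  have hsq_zero := (intervalIntegral.integral_eq_zero_iff_of_le_of_nonneg_ae hab hnonneg hint).1 hg
  have hg_root : ∀ᵐ x ∂μ, g.eval x ≠ 0 :=
    ae_iff.2 <| by
      simpa only [not_not, IsRoot.def] using (finite_setOfPred_isRoot hg_ne).measure_zero μ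
  rw [Set.uIoc_of_le hab]
  filter_upwards [ae_restrict_iff' measurableSet_Ioc |>.1 hsq_zero, hg_root] with x hsq hx hIoc
  simpa [hx] using hsq hIoc

lemma Polynomial.exists_eq_smul_of_orthogonal [NullSingletonClass μ] (hab : a ≤ b)
    (hω_nonneg : ∀ x ∈ Set.Icc a b, 0 ≤ ω x)
    (hω_mom : ∀ n : ℕ, IntervalIntegrable (fun x => x ^ n * ω x) μ a b)
    (hω_ne : ∫ x in a..b, ω x ∂μ ≠ 0) {m : ℕ} {P : ℝ[X]} (hPdeg : P.degree = m)
    (hPorth : ∀ q : ℝ[X], q.degree < m → ∫ x in a..b, P.eval x * q.eval x * ω x ∂μ = 0)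
    {f : ℝ[X]} (hfdeg : f.degree ≤ m)
    (hforth : ∀ q : ℝ[X], q.degree < m →
      ∫ x in a..b, f.eval x * q.eval x * ω x ∂μ = 0) :
    ∃ c : ℝ, f = c • P := by
  have hPm : P.coeff m ≠ 0 := coeff_ne_zero_of_eq_degree hPdeg
  set c := f.coeff m / P.coeff m
  set g := f - c • P
  have hg_deg : g.degree < m := by
    refine (degree_lt_iff_coeff_zero g m).2 fun k hk => ?_
    obtain rfl | hk := hk.eq_or_lt
    · simp [g, c, div_mul_cancel₀ _ hPm]
    · have hf : f.coeff k = 0 :=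
        coeff_eq_zero_of_degree_lt (hfdeg.trans_lt (by exact_mod_cast hk))
      have hP : P.coeff k = 0 := coeff_eq_zero_of_degree_lt (by rw [hPdeg]; exact_mod_cast hk)
      simp [g, hf, hP]
  have hint (p : ℝ[X]) : IntervalIntegrable (fun x => p.eval x * g.eval x * ω x) μ a b := by
    simpa only [eval_mul, mul_assoc] using intervalIntegrable_eval_mul hω_mom (p * g)
  have hg_orth : ∫ x in a..b, g.eval x * g.eval x * ω x ∂μ = 0 :=
    calc ∫ x in a..b, g.eval x * g.eval x * ω x ∂μ
        = (∫ x in a..b, f.eval x * g.eval x * ω x ∂μ)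
          - c * ∫ x in a..b, P.eval x * g.eval x * ω x ∂μ := by
          rw [← intervalIntegral.integral_const_mul,
            ← intervalIntegral.integral_sub (hint f) ((hint P).const_mul c)]
          congr 1 with x
          simp only [g, eval_sub, eval_smul, smul_eq_mul]
          ring
      _ = 0 := by rw [hforth g hg_deg, hPorth g hg_deg, mul_zero, sub_zero]
  exact ⟨c, sub_eq_zero.1 <|
    eq_zero_of_integral_eval_mul_self_mul_eq_zero hab hω_nonneg hω_mom hω_ne hg_orth⟩

end WeightedIntegral

lemma eq_pow_mul_of_forall_succ_eq_mul {M : Type*} [Monoid M] {v : ℕ → M} {r : M} {n : ℕ}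
    (hv : ∀ i, 1 ≤ i → i < n → v (i + 1) = r * v i) :
    ∀ i, 1 ≤ i → i ≤ n → v i = r ^ (i - 1) * v 1 := by
  intro i hi
  induction i, hi using Nat.le_induction with
  | base => simp
  | succ i hi ih =>
    intro hin
    rw [hv i hi hin, ih (by omega), ← mul_assoc, ← pow_succ', Nat.sub_add_comm hi]

lemma eq_zero_of_forall_succ_eq_mul_of_pow_ne_one {R : Type*} [Ring R] [NoZeroDivisors R]
    {v : ℕ → R} {r : R} {n : ℕ} (hn : 1 ≤ n) (hr : r ^ n ≠ 1)
    (hv : ∀ i, 1 ≤ i → i < n → v (i + 1) = r * v i) (hclose : v 1 = r * v n) :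
    ∀ i, 1 ≤ i → i ≤ n → v i = 0 := by
  have hpow := eq_pow_mul_of_forall_succ_eq_mul hv
  have hfix : v 1 = r ^ n * v 1 :=
    calc v 1 = r * v n := hclose
      _ = r ^ n * v 1 := by
        rw [hpow n hn le_rfl, ← mul_assoc, ← pow_succ', Nat.sub_add_cancel hn]
  have hv1 : v 1 = 0 := by
    refine (mul_eq_zero.1 ?_).resolve_left (sub_ne_zero.2 hr.symm)
    rw [sub_mul, one_mul, ← hfix, sub_self]
  intro i hi hin
  rw [hpow i hi hin, hv1, mul_zero]

lemma Polynomial.eval_smul_eq_div_mul {a b : ℝ} {P : ℝ[X]} (ha : P.eval a ≠ 0) (c : ℝ) :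
    (c • P).eval b = P.eval b / P.eval a * (c • P).eval a := by
  simp only [eval_smul, smul_eq_mul]
  field_simp

theorem stmt_0_general (a b : ℝ) (hab : a < b) (ω : ℝ → ℝ)
    (hω_nonneg : ∀ x ∈ Set.Icc a b, 0 ≤ ω x)
    (hω_mom : ∀ n : ℕ, IntervalIntegrable (fun x => x ^ n * ω x) MeasureTheory.volume a b)
    (hω_pos : 0 < ∫ x in a..b, ω x)
    (m N : ℕ) (hN : 3 ≤ N)
    (P : Polynomial ℝ) (hPdeg : P.degree = (m : WithBot ℕ))
    (hPorth : ∀ q : Polynomial ℝ, q.degree < (m : WithBot ℕ) →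
      ∫ x in a..b, P.eval x * q.eval x * ω x = 0)
    (ha : P.eval a ≠ 0) :
    (P.eval b / P.eval a) ^ N ≠ 1 ↔
      (∀ f : ℕ → Polynomial ℝ,
        (∀ i, 1 ≤ i → i ≤ N → (f i).degree ≤ (m : WithBot ℕ)) →
        (∀ i, 1 ≤ i → i ≤ N → ∀ q : Polynomial ℝ, q.degree < (m : WithBot ℕ) →
          ∫ x in a..b, (f i).eval x * q.eval x * ω x = 0) →
        (∀ i, 1 ≤ i → i ≤ N - 1 → (f i).eval b = (f (i + 1)).eval a) →
        (f N).eval b = (f 1).eval a →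
        ∀ i, 1 ≤ i → i ≤ N → f i = 0) := by
  have hscale := eval_smul_eq_div_mul (b := b) ha
  set r := P.eval b / P.eval a
  constructor
  · intro hr f hdeg horth hmatch hcyc
    have hrep : ∀ i, 1 ≤ i → i ≤ N → ∃ c : ℝ, f i = c • P := fun i h1 h2 =>
      exists_eq_smul_of_orthogonal hab.le hω_nonneg hω_mom hω_pos.ne' hPdeg hPorth
        (hdeg i h1 h2) (horth i h1 h2)
    have hevb : ∀ i, 1 ≤ i → i ≤ N → (f i).eval b = r * (f i).eval a := fun i h1 h2 => by
      obtain ⟨c, hc⟩ := hrep i h1 h2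
      rw [hc, hscale]
    have hva := eq_zero_of_forall_succ_eq_mul_of_pow_ne_one (v := fun i => (f i).eval a)
      (by omega) hr (fun i h1 h2 => by rw [← hmatch i h1 (by omega), hevb i h1 h2.le])
      (by rw [← hcyc, hevb N (by omega) le_rfl])
    intro i h1 h2
    obtain ⟨c, hc⟩ := hrep i h1 h2
    have hc0 := hva i h1 h2
    simp only [hc, eval_smul, smul_eq_mul, mul_eq_zero, ha, or_false] at hc0
    rw [hc, hc0, zero_smul]
  · intro hU hr
    have hstep (i : ℕ) (hi : 1 ≤ i) : (r ^ (i - 1) • P).eval b = (r ^ i • P).eval a := by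
      rw [hscale, eval_smul, eval_smul, smul_eq_mul, smul_eq_mul, ← mul_assoc, ← pow_succ',
        Nat.sub_add_cancel hi]
    have hP := hU (fun i => r ^ (i - 1) • P) (fun i _ _ => (degree_smul_le _ _).trans hPdeg.le)
      (fun i _ _ q hq => by
        have hPq := hPorth q hq
        simp only [eval_smul, smul_eq_mul, mul_assoc] at hPq ⊢
        rw [intervalIntegral.integral_const_mul, hPq, mul_zero])
      (fun i h1 _ => hstep i h1) (by rw [hstep N (by omega), hr]; simp) 1 le_rfl (by omega)
    exact ha (by simpa using congrArg (eval a) hP)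

/-- Unisolvence characterization (Theorem 1 of the paper).
Let `a < b`, `ω` a weight function on `[a,b]`, `m ≥ 1`, `N ≥ 3`, and `P` an `m`-th
orthogonal polynomial w.r.t. `ω` with `P a ≠ 0` and `P b ≠ 0`.  Then
`(P b / P a)^N ≠ 1` iff the unisolvence property for cyclically matched
edgewise polynomials of degree ≤ m holds. -/
theorem stmt_0 (a b : ℝ) (hab : a < b) (ω : ℝ → ℝ)
    (hω_nonneg : ∀ x ∈ Set.Icc a b, 0 ≤ ω x)
    (hω_mom : ∀ n : ℕ, IntervalIntegrable (fun x => x ^ n * ω x) MeasureTheory.volume a b)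
    (hω_pos : 0 < ∫ x in a..b, ω x)
    (m N : ℕ) (hm : 1 ≤ m) (hN : 3 ≤ N)
    (P : Polynomial ℝ) (hPdeg : P.degree = (m : WithBot ℕ))
    (hPorth : ∀ q : Polynomial ℝ, q.degree < (m : WithBot ℕ) →
      ∫ x in a..b, P.eval x * q.eval x * ω x = 0)
    (ha : P.eval a ≠ 0) (hb : P.eval b ≠ 0) :
    (P.eval b / P.eval a) ^ N ≠ 1 ↔
      (∀ f : ℕ → Polynomial ℝ,
        (∀ i, 1 ≤ i → i ≤ N → (f i).degree ≤ (m : WithBot ℕ)) →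
        (∀ i, 1 ≤ i → i ≤ N → ∀ q : Polynomial ℝ, q.degree < (m : WithBot ℕ) →
          ∫ x in a..b, (f i).eval x * q.eval x * ω x = 0) →
        (∀ i, 1 ≤ i → i ≤ N - 1 → (f i).eval b = (f (i + 1)).eval a) →
        (f N).eval b = (f 1).eval a →
        ∀ i, 1 ≤ i → i ≤ N → f i = 0) :=
  stmt_0_general a b hab ω hω_nonneg hω_mom hω_pos m N hN P hPdeg hPorth ha
end

section
/- Let α, β > −1 with α ≠ β, and let m ≥ 1 and N ≥ 1 be integers. Let p be the monic Jacobi polynomial of degree m for parameters (α, β). Then (p(1)/p(−1))^N ≠ 1. -/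
/-!
By Rodrigues' formula the orthogonal polynomial is a multiple of the polynomial `G` with
`(d/dt)^m [(1-t)^(α+m) (1+t)^(β+m)] = (1-t)^α (1+t)^β G(t)`: `m` integrations by parts show
that `G` is orthogonal to all polynomials of degree `< m`, and such a polynomial of degree `≤ m`
is a scalar multiple of `p`. The recursion defining `G` gives `|G(1)| = ∏_{j<m} 2(α+m-j)`
and `|G(-1)| = ∏_{j<m} 2(β+m-j)`, which differ when `α ≠ β` since the product is strictly
increasing in the parameter. Hence `|p(1)| ≠ |p(-1)|`, while `(p(1)/p(-1))^N = 1` would force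
equality.
-/

open MeasureTheory intervalIntegral Set Polynomial
open scoped Interval

lemma rpow_eq_rpow_sub_one_mul {x : ℝ} (hx : 0 < x) (a : ℝ) : x ^ a = x ^ (a - 1) * x := by
  rw [← Real.rpow_add_one hx.ne', sub_add_cancel]

noncomputable def jacobiWeight (α β t : ℝ) : ℝ := (1 - t) ^ α * (1 + t) ^ β

section JacobiWeight

variable {α β : ℝ}

lemma jacobiWeight_nonneg {t : ℝ} (ht : t ∈ Icc (-1 : ℝ) 1) : 0 ≤ jacobiWeight α β t :=
  mul_nonneg (Real.rpow_nonneg (by linarith [ht.2]) α) (Real.rpow_nonneg (by linarith [ht.1]) β)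

lemma jacobiWeight_pos {t : ℝ} (ht : t ∈ Ioo (-1 : ℝ) 1) : 0 < jacobiWeight α β t :=
  mul_pos (Real.rpow_pos_of_pos (by linarith [ht.2]) α)
    (Real.rpow_pos_of_pos (by linarith [ht.1]) β)

lemma jacobiWeight_one (hα : 0 < α) : jacobiWeight α β 1 = 0 := by
  simp [jacobiWeight, Real.zero_rpow hα.ne']

lemma jacobiWeight_neg_one (hβ : 0 < β) : jacobiWeight α β (-1) = 0 := by
  simp [jacobiWeight, Real.zero_rpow hβ.ne']

lemma continuous_jacobiWeight (hα : 0 ≤ α) (hβ : 0 ≤ β) : Continuous (jacobiWeight α β) :=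
  ((Real.continuous_rpow_const hα).comp (by fun_prop)).mul
    ((Real.continuous_rpow_const hβ).comp (by fun_prop))

lemma jacobiWeight_eq_mul_one_sub_sq {t : ℝ} (ht : t ∈ Ioo (-1 : ℝ) 1) :
    jacobiWeight α β t = jacobiWeight (α - 1) (β - 1) t * (1 - t ^ 2) := by
  rw [jacobiWeight, jacobiWeight, rpow_eq_rpow_sub_one_mul (by linarith [ht.2]) α,
    rpow_eq_rpow_sub_one_mul (by linarith [ht.1]) β]
  ring

lemma hasDerivAt_jacobiWeight {t : ℝ} (ht : t ∈ Ioo (-1 : ℝ) 1) :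
    HasDerivAt (jacobiWeight α β)
      (jacobiWeight (α - 1) (β - 1) t * (β * (1 - t) - α * (1 + t))) t := by
  have h₁ : HasDerivAt (fun t : ℝ => (1 - t) ^ α) (α * (1 - t) ^ (α - 1) * (-1)) t :=
    (Real.hasDerivAt_rpow_const (Or.inl (by linarith [ht.2]))).comp t
      ((hasDerivAt_id t).const_sub 1)
  have h₂ : HasDerivAt (fun t : ℝ => (1 + t) ^ β) (β * (1 + t) ^ (β - 1) * 1) t :=
    (Real.hasDerivAt_rpow_const (Or.inl (by linarith [ht.1]))).comp t
      ((hasDerivAt_id t).const_add 1)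
  refine (h₁.mul h₂).congr_deriv ?_
  rw [jacobiWeight, rpow_eq_rpow_sub_one_mul (by linarith [ht.2]) α,
    rpow_eq_rpow_sub_one_mul (by linarith [ht.1]) β]
  ring

lemma intervalIntegrable_jacobiWeight (hα : -1 < α) (hβ : -1 < β) :
    IntervalIntegrable (jacobiWeight α β) volume (-1) 1 := by
  have h₁ : IntervalIntegrable (fun t : ℝ => (1 - t) ^ α) volume 0 1 := by
    simpa using ((intervalIntegrable_rpow' (a := 0) (b := 1) hα).comp_sub_left 1).symm
  have h₂ : IntervalIntegrable (fun t : ℝ => (1 + t) ^ β) volume (-1) 0 := by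
    simpa [add_comm] using (intervalIntegrable_rpow' (a := 0) (b := 1) hβ).comp_add_right 1
  refine (h₂.continuousOn_mul ?_).trans (h₁.mul_continuousOn ?_)
  · refine (continuousOn_const.sub continuousOn_id).rpow_const fun t ht => Or.inl ?_
    rw [uIcc_of_le (by norm_num)] at ht
    show 1 - t ≠ 0
    linarith [ht.2]
  · refine (continuousOn_const.add continuousOn_id).rpow_const fun t ht => Or.inl ?_
    rw [uIcc_of_le (by norm_num)] at ht
    show 1 + t ≠ 0
    linarith [ht.1]

lemma intervalIntegrable_eval_mul_jacobiWeight (hα : -1 < α) (hβ : -1 < β) (P : ℝ[X]) :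
    IntervalIntegrable (fun t => P.eval t * jacobiWeight α β t) volume (-1) 1 :=
  (intervalIntegrable_jacobiWeight hα hβ).continuousOn_mul P.continuous.continuousOn

lemma eq_zero_of_integral_mul_self_mul_jacobiWeight (hα : -1 < α) (hβ : -1 < β) {h : ℝ[X]}
    (h₀ : ∫ t in (-1 : ℝ)..1, h.eval t * h.eval t * jacobiWeight α β t = 0) : h = 0 := by
  by_contra hne
  set f : ℝ → ℝ := fun t => h.eval t * h.eval t * jacobiWeight α β t
  have hf : IntervalIntegrable f volume (-1) 1 := by
    simpa only [eval_mul] using intervalIntegrable_eval_mul_jacobiWeight hα hβ (h * h)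
  have hf_nonneg : 0 ≤ᵐ[volume.restrict (Ι (-1 : ℝ) 1)] f := by
    rw [uIoc_of_le (by norm_num)]
    filter_upwards [ae_restrict_mem measurableSet_Ioc] with t ht
    exact mul_nonneg (mul_self_nonneg _) (jacobiWeight_nonneg (Ioc_subset_Icc_self ht))
  have hsupp : Ioo (-1 : ℝ) 1 \ {t | h.IsRoot t} ⊆ Function.support f ∩ Ioc (-1) 1 :=
    fun t ht => ⟨(mul_pos (mul_self_pos.2 ht.2) (jacobiWeight_pos ht.1)).ne',
      Ioo_subset_Ioc_self ht.1⟩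
  have hpos : 0 < volume (Function.support f ∩ Ioc (-1) 1) := by
    refine lt_of_lt_of_le ?_ (measure_mono hsupp)
    rw [measure_sdiff_null ((h.finite_setOfPred_isRoot hne).measure_zero _)]
    exact (Measure.measure_Ioo_pos _).2 (by norm_num)
  exact ((integral_pos_iff_support_of_nonneg_ae' hf_nonneg hf).2 ⟨by norm_num, hpos⟩).ne' h₀

def IsJacobiOrthogonal (α β : ℝ) (m : ℕ) (p : ℝ[X]) : Prop :=
  ∀ q : ℝ[X], q.degree < m →
    ∫ t in (-1 : ℝ)..1, p.eval t * q.eval t * jacobiWeight α β t = 0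

namespace IsJacobiOrthogonal

variable {m : ℕ} {p g : ℝ[X]}

lemma sub (hα : -1 < α) (hβ : -1 < β) (hp : IsJacobiOrthogonal α β m p)
    (hg : IsJacobiOrthogonal α β m g) : IsJacobiOrthogonal α β m (p - g) := by
  intro q hq
  have hint : ∀ P : ℝ[X],
      IntervalIntegrable (fun t => P.eval t * q.eval t * jacobiWeight α β t) volume (-1) 1 :=
    fun P => by simpa only [eval_mul] using intervalIntegrable_eval_mul_jacobiWeight hα hβ (P * q)
  simp only [eval_sub, sub_mul]
  rw [integral_sub (hint p) (hint g), hp q hq, hg q hq, sub_zero]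

lemma C_mul (c : ℝ) (hp : IsJacobiOrthogonal α β m p) :
    IsJacobiOrthogonal α β m (C c * p) := by
  intro q hq
  simp only [eval_mul, eval_C, mul_assoc]
  rw [intervalIntegral.integral_const_mul]
  simp only [← mul_assoc, hp q hq, mul_zero]

lemma eq_C_mul (hα : -1 < α) (hβ : -1 < β) (hp : IsJacobiOrthogonal α β m p)
    (hmonic : p.Monic) (hpdeg : p.natDegree = m) (hg : IsJacobiOrthogonal α β m g)
    (hgdeg : g.natDegree ≤ m) :
    g = C (g.coeff m) * p := by
  set h := g - C (g.coeff m) * p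
  have hdeg : h.degree < m := by
    refine (degree_lt_iff_coeff_zero _ _).2 fun i hi => ?_
    rcases (Nat.cast_le.1 hi).eq_or_lt with rfl | hlt
    · simp [h, ← hpdeg, hmonic.coeff_natDegree]
    · simp [h, coeff_eq_zero_of_natDegree_lt (hgdeg.trans_lt hlt),
        coeff_eq_zero_of_natDegree_lt (hpdeg.trans_lt hlt)]
  exact (sub_eq_zero.1 (eq_zero_of_integral_mul_self_mul_jacobiWeight hα hβ
    ((hg.sub hα hβ (hp.C_mul _)) h hdeg)))

end IsJacobiOrthogonal

end JacobiWeight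

lemma two_mul_sub_pos_of_mem_range {a : ℝ} {k j : ℕ} (ha : (k : ℝ) < a + 1)
    (hj : j ∈ Finset.range k) : 0 < 2 * (a - j) := by
  have : (j : ℝ) + 1 ≤ k := by exact_mod_cast Finset.mem_range.1 hj
  linarith

lemma prod_two_mul_sub_lt_prod {a b : ℝ} {k : ℕ} (hk : k ≠ 0) (ha : (k : ℝ) < a + 1)
    (hab : a < b) : ∏ j ∈ Finset.range k, 2 * (a - j) < ∏ j ∈ Finset.range k, 2 * (b - j) :=
  Finset.prod_lt_prod_of_nonempty (fun _ hj => two_mul_sub_pos_of_mem_range ha hj)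
    (fun _ _ => by linarith) (Finset.nonempty_range_iff.2 hk)

/-- `rodrigues a b k` is the polynomial `G_k` with
`(d/dt)^k [(1-t)^a (1+t)^b] = (1-t)^(a-k) (1+t)^(b-k) G_k(t)`. -/
noncomputable def rodrigues (a b : ℝ) : ℕ → ℝ[X]
  | 0 => 1
  | k + 1 => (1 - X ^ 2) * derivative (rodrigues a b k)
      + (C (b - k) * (1 - X) - C (a - k) * (1 + X)) * rodrigues a b k

namespace rodrigues

variable (a b : ℝ)

lemma natDegree_le (k : ℕ) : (rodrigues a b k).natDegree ≤ k := by
  induction k with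
  | zero => simp [rodrigues]
  | succ k ih =>
    rw [rodrigues]
    refine (natDegree_add_le _ _).trans (max_le ?_ ?_)
    · rcases k with _ | k
      · simp [rodrigues]
      refine natDegree_mul_le.trans ?_
      have h₁ : (1 - X ^ 2 : ℝ[X]).natDegree ≤ 2 := by compute_degree
      have h₂ := (natDegree_derivative_le (rodrigues a b (k + 1))).trans
        (Nat.sub_le_sub_right ih 1)
      omega
    · refine natDegree_mul_le.trans ?_
      have h₁ : (C (b - k) * (1 - X) - C (a - k) * (1 + X) : ℝ[X]).natDegree ≤ 1 := by
        compute_degree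
      omega

lemma eval_one (k : ℕ) : (rodrigues a b k).eval 1 = ∏ j ∈ Finset.range k, -2 * (a - j) := by
  induction k with
  | zero => simp [rodrigues]
  | succ k ih =>
    rw [Finset.prod_range_succ, ← ih, rodrigues]
    simp only [eval_add, eval_mul, eval_sub, Polynomial.eval_one, eval_pow, eval_X, eval_C]
    ring

lemma eval_neg_one (k : ℕ) :
    (rodrigues a b k).eval (-1) = ∏ j ∈ Finset.range k, 2 * (b - j) := by
  induction k with
  | zero => simp [rodrigues]
  | succ k ih =>
    rw [Finset.prod_range_succ, ← ih, rodrigues]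
    simp only [eval_add, eval_mul, eval_sub, Polynomial.eval_one, eval_pow, eval_X, eval_C]
    ring

lemma hasDerivAt_jacobiWeight_mul (k : ℕ) (r : ℝ[X]) {t : ℝ} (ht : t ∈ Ioo (-1 : ℝ) 1) :
    HasDerivAt (fun t => jacobiWeight (a - k) (b - k) t * (rodrigues a b k * r).eval t)
      ((rodrigues a b (k + 1) * r).eval t * jacobiWeight (a - (k + 1 : ℕ)) (b - (k + 1 : ℕ)) t
        + (rodrigues a b k * derivative r).eval t * jacobiWeight (a - k) (b - k) t) t := by
  refine ((hasDerivAt_jacobiWeight ht).mul ((rodrigues a b k * r).hasDerivAt t)).congr_deriv ?_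
  rw [jacobiWeight_eq_mul_one_sub_sq (α := a - k) (β := b - k) ht, rodrigues, Nat.cast_succ,
    ← sub_sub, ← sub_sub]
  simp only [derivative_mul, eval_add, eval_mul, eval_sub, Polynomial.eval_one, eval_pow, eval_X,
    eval_C]
  ring

variable {a b}

lemma integral_succ_mul {k : ℕ} (ha : (k : ℝ) < a) (hb : (k : ℝ) < b) (r : ℝ[X]) :
    ∫ t in (-1 : ℝ)..1,
        (rodrigues a b (k + 1) * r).eval t * jacobiWeight (a - (k + 1 : ℕ)) (b - (k + 1 : ℕ)) t
      = -∫ t in (-1 : ℝ)..1,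
          (rodrigues a b k * derivative r).eval t * jacobiWeight (a - k) (b - k) t := by
  have hA : 0 < a - k := sub_pos.2 ha
  have hB : 0 < b - k := sub_pos.2 hb
  set F : ℝ → ℝ := fun t => jacobiWeight (a - k) (b - k) t * (rodrigues a b k * r).eval t
  have hF : Continuous F := (continuous_jacobiWeight hA.le hB.le).mul (Polynomial.continuous _)
  have hF₁ : F 1 = 0 := by simp only [F, jacobiWeight_one hA, zero_mul]
  have hF_neg : F (-1) = 0 := by simp only [F, jacobiWeight_neg_one hB, zero_mul]
  have hint₁ := intervalIntegrable_eval_mul_jacobiWeight (α := a - (k + 1 : ℕ))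
    (β := b - (k + 1 : ℕ)) (by push_cast; linarith) (by push_cast; linarith)
    (rodrigues a b (k + 1) * r)
  have hint₂ := intervalIntegrable_eval_mul_jacobiWeight (α := a - k) (β := b - k)
    (by linarith) (by linarith) (rodrigues a b k * derivative r)
  have hFTC := integral_eq_sub_of_hasDerivAt_of_tendsto (by norm_num)
    (fun t ht => hasDerivAt_jacobiWeight_mul a b k r ht) (hint₁.add hint₂)
    (hF.tendsto _ |>.mono_left nhdsWithin_le_nhds) (hF.tendsto _ |>.mono_left nhdsWithin_le_nhds)
  rw [hF₁, hF_neg, sub_zero, integral_add hint₁ hint₂] at hFTC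
  linarith

lemma integral_mul {k : ℕ} (ha : (k : ℝ) < a + 1) (hb : (k : ℝ) < b + 1) (r : ℝ[X]) :
    ∫ t in (-1 : ℝ)..1, (rodrigues a b k * r).eval t * jacobiWeight (a - k) (b - k) t
      = (-1) ^ k * ∫ t in (-1 : ℝ)..1, (derivative^[k] r).eval t * jacobiWeight a b t := by
  induction k generalizing r with
  | zero => simp [rodrigues]
  | succ k ih =>
    push_cast at ha hb
    rw [integral_succ_mul (by linarith) (by linarith), ih (by linarith) (by linarith),
      Function.iterate_succ_apply, pow_succ]
    ring

lemma integral_mul_eq_zero {k : ℕ} (ha : (k : ℝ) < a + 1) (hb : (k : ℝ) < b + 1) {q : ℝ[X]}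
    (hq : q.degree < k) :
    ∫ t in (-1 : ℝ)..1, (rodrigues a b k).eval t * q.eval t * jacobiWeight (a - k) (b - k) t
      = 0 := by
  have hq' : derivative^[k] q = 0 := by
    rcases eq_or_ne q 0 with rfl | hq0
    · simp
    · exact iterate_derivative_eq_zero ((natDegree_lt_iff_degree_lt hq0).2 hq)
  simpa only [eval_mul, hq', eval_zero, zero_mul, intervalIntegral.integral_zero, mul_zero]
    using integral_mul ha hb q

lemma abs_eval_one {k : ℕ} (ha : (k : ℝ) < a + 1) :
    |(rodrigues a b k).eval 1| = ∏ j ∈ Finset.range k, 2 * (a - j) := by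
  rw [eval_one, Finset.abs_prod]
  refine Finset.prod_congr rfl fun j hj => ?_
  rw [neg_mul, abs_neg, abs_of_pos (two_mul_sub_pos_of_mem_range ha hj)]

lemma abs_eval_neg_one {k : ℕ} (hb : (k : ℝ) < b + 1) :
    |(rodrigues a b k).eval (-1)| = ∏ j ∈ Finset.range k, 2 * (b - j) := by
  rw [eval_neg_one, Finset.abs_prod]
  exact Finset.prod_congr rfl fun j hj => abs_of_pos (two_mul_sub_pos_of_mem_range hb hj)

end rodrigues

lemma isJacobiOrthogonal_rodrigues {α β : ℝ} (hα : -1 < α) (hβ : -1 < β) (m : ℕ) :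
    IsJacobiOrthogonal α β m (rodrigues (α + m) (β + m) m) := fun _ hq => by
  simpa only [add_sub_cancel_right] using
    rodrigues.integral_mul_eq_zero (a := α + m) (b := β + m) (by linarith) (by linarith) hq

/-- For the monic Jacobi polynomial `p` of degree `m` with parameters
`α ≠ β`, both `> -1`, one has `(p(1)/p(-1))^N ≠ 1` for every `N ≥ 1`. -/
theorem stmt_8 (α β : ℝ) (hα : -1 < α) (hβ : -1 < β) (hαβ : α ≠ β)
    (m N : ℕ) (hm : 1 ≤ m) (hN : 1 ≤ N)
    (p : Polynomial ℝ) (hmonic : p.Monic) (hpdeg : p.degree = (m : WithBot ℕ))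
    (hporth : ∀ q : Polynomial ℝ, q.degree < (m : WithBot ℕ) →
      ∫ t in (-1 : ℝ)..1, p.eval t * q.eval t * ((1 - t) ^ α * (1 + t) ^ β) = 0) :
    (p.eval 1 / p.eval (-1)) ^ N ≠ 1 := by
  intro hpow
  set g := rodrigues (α + m) (β + m) m
  have hgp : g = C (g.coeff m) * p :=
    IsJacobiOrthogonal.eq_C_mul hα hβ hporth hmonic (natDegree_eq_of_degree_eq_some hpdeg)
      (isJacobiOrthogonal_rodrigues hα hβ m) (rodrigues.natDegree_le _ _ m)
  have hp : |p.eval 1| = |p.eval (-1)| := by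
    have h₁ : |p.eval 1| / |p.eval (-1)| = 1 := by
      rw [← abs_div, ← pow_eq_one_iff_of_nonneg (abs_nonneg _) (by omega : N ≠ 0),
        ← abs_pow, hpow, abs_one]
    exact (div_eq_one_iff_eq fun h₀ => by simp [h₀] at h₁).1 h₁
  have hg : |g.eval 1| = |g.eval (-1)| := by
    rw [hgp, eval_mul, eval_mul, eval_C, eval_C, abs_mul, abs_mul, hp]
  rw [rodrigues.abs_eval_one (by linarith), rodrigues.abs_eval_neg_one (by linarith)] at hg
  rcases hαβ.lt_or_gt with h | h
  · exact (prod_two_mul_sub_lt_prod (by omega) (by linarith) (by linarith)).ne hg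
  · exact (prod_two_mul_sub_lt_prod (by omega) (by linarith) (by linarith)).ne' hg
end

section
/- Let a < b be reals, λ > −1/2, m ≥ 1 an integer, and let φ(x) = (a+b−2x)/(a−b) (so φ(a) = −1, φ(b) = 1). Let C be a polynomial of degree exactly m satisfying ∫_{−1}^{1} C(t) q(t) (1−t²)^{λ+1/2} dt = 0 for every polynomial q of degree at most m−1 (so that C(1) ≠ 0 and all zeros of C lie in (−1,1)). Let ξ_1, …, ξ_m ∈ (a,b) be the preimages under φ of the zeros of C, and suppose real weights w_a, w_b, w_1, …, w_m satisfy the exactness property: ∫_a^b p(x) (1−φ(x)²)^{λ−1/2} dx = w_a p(a) + w_b p(b) + Σ_{i=1}^{m} w_i p(ξ_i) for every polynomial p of degree at most 2m+1. Then w_a = w_b = (b−a) / (4 C(1)²) · ∫_{−1}^{1} C(t)² (1−t²)^{λ−1/2} dt. -/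
/-!
Because the weight `(1 - t²)^(λ+1/2)` is even and positive on `(-1, 1)`, the orthogonal polynomial
`C` has the parity of its degree, so `C(-1)² = C(1)²` and `t C(t)²` is odd. Pulling the rule back
to `[-1, 1]` along `φ` and testing it on `C²` and `t C²`, both of which vanish at the interior
nodes, gives `(b-a)/2 · ∫ C² w = (w_a + w_b) C(1)²` and `0 = (w_b - w_a) C(1)²`.
-/

open Polynomial MeasureTheory Set Filter intervalIntegral

namespace Polynomial

theorem degree_comp_neg_X_sub_lt {R : Type*} [CommRing R] [IsDomain R] {p : R[X]}
    (hp : p ≠ 0) : (p.comp (-X) - (-1) ^ p.natDegree * p).degree < p.natDegree := by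
  have hunit : ((-1 : R[X]) ^ p.natDegree).degree = 0 :=
    degree_eq_zero_of_isUnit (isUnit_neg_one.pow _)
  rw [← degree_eq_natDegree hp, ← p.degree_comp_neg_X]
  refine degree_sub_lt_left ?_ (comp_neg_X_eq_zero_iff.not.mpr hp) ?_
  · rw [degree_comp_neg_X, degree_mul, hunit, zero_add]
  · simp [leadingCoeff_mul]

theorem integral_sq_mul_pos {a b : ℝ} (hab : a < b) {w : ℝ → ℝ}
    (hw_int : IntervalIntegrable w volume a b) (hw_pos : ∀ t ∈ Ioo a b, 0 < w t)
    {p : ℝ[X]} (hp : p ≠ 0) : 0 < ∫ t in a..b, p.eval t ^ 2 * w t := by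
  have hnonneg : 0 ≤ᵐ[volume.restrict (uIoc a b)] fun t => p.eval t ^ 2 * w t := by
    rw [EventuallyLE, uIoc_of_le hab.le]
    refine ae_restrict_of_ae_eq_of_ae_restrict Ioo_ae_eq_Ioc ?_
    rw [ae_restrict_iff' measurableSet_Ioo]
    filter_upwards with t ht using mul_nonneg (sq_nonneg _) (hw_pos t ht).le
  have hsupp : Ioo a b \ {t | p.IsRoot t} ⊆
      Function.support (fun t => p.eval t ^ 2 * w t) ∩ Ioc a b := fun t ⟨ht, hroot⟩ =>
    ⟨(mul_pos (pow_two_pos_of_ne_zero hroot) (hw_pos t ht)).ne', Ioo_subset_Ioc_self ht⟩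
  rw [integral_pos_iff_support_of_nonneg_ae' hnonneg
    (hw_int.continuousOn_mul (by fun_prop : Continuous fun t => p.eval t ^ 2).continuousOn)]
  refine ⟨hab, ?_⟩
  calc (0 : ENNReal) < volume (Ioo a b) := (Measure.measure_Ioo_pos _).mpr hab
    _ = volume (Ioo a b \ {t | p.IsRoot t}) :=
        (measure_sdiff_null ((finite_setOfPred_isRoot hp).measure_zero volume)).symm
    _ ≤ _ := measure_mono hsupp

section Symmetric

variable {c : ℝ} {w : ℝ → ℝ} {p : ℝ[X]} {n : ℕ}

theorem integral_eval_comp_neg_X_mul_eq_zero (hw_even : ∀ t, w (-t) = w t)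
    (horth : ∀ q : ℝ[X], q.degree < n → ∫ t in (-c)..c, p.eval t * q.eval t * w t = 0)
    {q : ℝ[X]} (hq : q.degree < n) :
    ∫ t in (-c)..c, (p.comp (-X)).eval t * q.eval t * w t = 0 := by
  have hreflect := integral_comp_neg (a := -c) (b := c)
    fun t => p.eval t * (q.comp (-X)).eval t * w t
  simp only [eval_comp, eval_neg, eval_X, neg_neg, hw_even] at hreflect
  simp only [eval_comp, eval_neg, eval_X, hreflect]
  simpa using horth _ (by rwa [degree_comp_neg_X] : (q.comp (-X)).degree < n)

theorem comp_neg_X_eq_of_forall_integral_mul_eq_zero (hc : 0 < c) (hw_even : ∀ t, w (-t) = w t)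
    (hw_int : IntervalIntegrable w volume (-c) c) (hw_pos : ∀ t ∈ Ioo (-c) c, 0 < w t)
    (horth : ∀ q : ℝ[X], q.degree < p.natDegree →
      ∫ t in (-c)..c, p.eval t * q.eval t * w t = 0) :
    p.comp (-X) = (-1) ^ p.natDegree * p := by
  rcases eq_or_ne p 0 with rfl | hp
  · simp
  set D := p.comp (-X) - (-1) ^ p.natDegree * p
  have hint : ∀ r : ℝ[X], IntervalIntegrable (fun t => r.eval t * w t) volume (-c) c :=
    fun r => hw_int.continuousOn_mul r.continuous.continuousOn
  have hD_orth : ∀ q : ℝ[X], q.degree < p.natDegree →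
      ∫ t in (-c)..c, D.eval t * q.eval t * w t = 0 := by
    intro q hq
    have hsplit : ∫ t in (-c)..c, D.eval t * q.eval t * w t =
        (∫ t in (-c)..c, ((p.comp (-X)) * q).eval t * w t) -
          (-1) ^ p.natDegree * ∫ t in (-c)..c, (p * q).eval t * w t := by
      rw [← intervalIntegral.integral_const_mul, ← integral_sub (hint _) ((hint _).const_mul _)]
      congr 1 with t
      simp only [D, eval_sub, eval_mul, eval_pow, eval_neg, eval_one]
      ring
    simp only [hsplit, eval_mul, integral_eval_comp_neg_X_mul_eq_zero hw_even horth hq,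
      horth q hq, mul_zero, sub_zero]
  -- `D` has degree `< p.natDegree`, so it is orthogonal to itself.
  have hD : D = 0 := by
    by_contra hD
    have hpos := integral_sq_mul_pos (by linarith) hw_int hw_pos hD
    simp only [sq, hD_orth D (degree_comp_neg_X_sub_lt hp), lt_irrefl] at hpos
  exact sub_eq_zero.mp hD

end Symmetric

end Polynomial

theorem intervalIntegral.integral_eq_zero_of_odd {f : ℝ → ℝ} (hf : ∀ x, f (-x) = -f x) (c : ℝ) :
    ∫ x in (-c)..c, f x = 0 := by
  have h := integral_comp_neg (a := -c) (b := c) f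
  simp only [hf, intervalIntegral.integral_neg, neg_neg] at h
  linarith

theorem intervalIntegral.integral_comp_affine_neg_one_one {E : Type*} [NormedAddCommGroup E]
    [NormedSpace ℝ E] {a b : ℝ} (hab : a ≠ b) (f : ℝ → E) :
    ∫ x in a..b, f ((a + b - 2 * x) / (a - b)) = ((b - a) / 2) • ∫ t in (-1)..1, f t := by
  have hk : 2 / (b - a) ≠ 0 := div_ne_zero two_ne_zero (sub_ne_zero.mpr hab.symm)
  have haffine : ∀ x, (a + b - 2 * x) / (a - b) = 2 / (b - a) * x + (a + b) / (a - b) := by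
    intro x; field_simp; ring
  have ha : 2 / (b - a) * a + (a + b) / (a - b) = -1 := by field_simp; ring
  have hb : 2 / (b - a) * b + (a + b) / (a - b) = 1 := by field_simp; ring
  simp_rw [haffine]
  rw [integral_comp_mul_add _ hk, ha, hb, inv_div]

theorem integral_eval_mul_eq_of_exact_comp_affine {a b : ℝ} (hab : a ≠ b) {W : ℝ → ℝ} {n : ℕ}
    {ι : Type*} [Fintype ι] {x : ι → ℝ} {wa wb : ℝ} {w : ι → ℝ}
    (hexact : ∀ p : ℝ[X], p.degree ≤ n →
      ∫ y in a..b, p.eval y * W ((a + b - 2 * y) / (a - b)) =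
        wa * p.eval a + wb * p.eval b + ∑ i, w i * p.eval (x i))
    {P : ℝ[X]} (hP : P.degree ≤ n) :
    (b - a) / 2 * ∫ t in (-1)..1, P.eval t * W t =
      wa * P.eval (-1) + wb * P.eval 1 + ∑ i, w i * P.eval ((a + b - 2 * x i) / (a - b)) := by
  set ψ : ℝ[X] := C (-2 / (a - b)) * X + C ((a + b) / (a - b))
  have hψ : ∀ y, ψ.eval y = (a + b - 2 * y) / (a - b) := fun y => by
    simp only [ψ, eval_add, eval_mul, eval_C, eval_X]; field_simp; ring
  have hψa : ψ.eval a = -1 := by rw [hψ]; field_simp; ring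
  have hψb : ψ.eval b = 1 := by rw [hψ]; field_simp; ring
  have hdeg : (P.comp ψ).degree ≤ n := by
    refine natDegree_le_iff_degree_le.mp ?_
    calc (P.comp ψ).natDegree = P.natDegree * ψ.natDegree := natDegree_comp
      _ ≤ P.natDegree * 1 := Nat.mul_le_mul_left _ natDegree_linear_le
      _ ≤ n := by rw [mul_one]; exact natDegree_le_iff_degree_le.mpr hP
  have h := hexact _ hdeg
  simp only [eval_comp, hψa, hψb, hψ] at h
  rw [← h, integral_comp_affine_neg_one_one hab (fun t => P.eval t * W t), smul_eq_mul]

theorem stmt_10_general (a b : ℝ) (hab : a < b) (lam : ℝ) (hlam : -(1/2 : ℝ) < lam)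
    (m : ℕ)
    (φ : ℝ → ℝ) (hφ : ∀ x, φ x = (a + b - 2 * x) / (a - b))
    (C : Polynomial ℝ) (hCdeg : C.degree = (m : WithBot ℕ))
    (hCorth : ∀ q : Polynomial ℝ, q.degree < (m : WithBot ℕ) →
      ∫ t in (-1 : ℝ)..1, C.eval t * q.eval t * (1 - t ^ 2) ^ (lam + 1/2) = 0)
    (hC1 : C.eval 1 ≠ 0)
    (ξ : Fin m → ℝ)
    (hξ_zero : ∀ i, C.eval (φ (ξ i)) = 0)
    (wa wb : ℝ) (w : Fin m → ℝ)
    (hexact : ∀ p : Polynomial ℝ, p.degree ≤ ((2 * m + 1 : ℕ) : WithBot ℕ) →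
      ∫ x in a..b, p.eval x * (1 - (φ x) ^ 2) ^ (lam - 1/2) =
        wa * p.eval a + wb * p.eval b + ∑ i, w i * p.eval (ξ i)) :
    wa = wb ∧
      wb = (b - a) / (4 * (C.eval 1) ^ 2) *
        ∫ t in (-1 : ℝ)..1, (C.eval t) ^ 2 * (1 - t ^ 2) ^ (lam - 1/2) := by
  obtain rfl : φ = fun x => (a + b - 2 * x) / (a - b) := funext hφ
  beta_reduce at hξ_zero
  have hCnat : C.natDegree = m := natDegree_eq_of_degree_eq_some hCdeg
  have hweight : Continuous fun t : ℝ => (1 - t ^ 2) ^ (lam + 1/2) :=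
    (Real.continuous_rpow_const (by linarith)).comp (by fun_prop)
  have hparity : C.comp (-X) = (-1) ^ m * C := hCnat ▸
    comp_neg_X_eq_of_forall_integral_mul_eq_zero one_pos (by simp)
      (hweight.intervalIntegrable _ _)
      (fun t ht => Real.rpow_pos_of_pos (by nlinarith [ht.1, ht.2]) _) (hCnat ▸ hCorth)
  have hsq : ∀ t, C.eval (-t) ^ 2 = C.eval t ^ 2 := fun t => by
    have := congr_arg (fun P => P.eval t ^ 2) hparity
    simpa [mul_pow, ← pow_mul, (even_two_mul m).neg_one_pow, mul_comm m 2] using this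
  have quad : ∀ P : ℝ[X], P.degree ≤ ((2 * m + 1 : ℕ) : WithBot ℕ) →
      (b - a) / 2 * ∫ t in (-1 : ℝ)..1, P.eval t * (1 - t ^ 2) ^ (lam - 1/2) =
        wa * P.eval (-1) + wb * P.eval 1 + ∑ i, w i * P.eval ((a + b - 2 * ξ i) / (a - b)) :=
    fun P hP => integral_eval_mul_eq_of_exact_comp_affine hab.ne hexact hP
  have hC2 := quad (C ^ 2) <| degree_le_of_natDegree_le <| by
    grw [natDegree_pow_le, hCnat]; omega
  have hXC2 := quad (X * C ^ 2) <| degree_le_of_natDegree_le <| by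
    grw [natDegree_mul_le, natDegree_pow_le, natDegree_X_le, hCnat]; omega
  have hodd : ∫ t in (-1 : ℝ)..1, (X * C ^ 2).eval t * (1 - t ^ 2) ^ (lam - 1/2) = 0 :=
    integral_eq_zero_of_odd (fun t => by simp [hsq]) 1
  simp only [eval_mul, eval_pow, eval_X, hξ_zero, hsq 1, ne_eq, OfNat.ofNat_ne_zero,
    not_false_eq_true, zero_pow, mul_zero, Finset.sum_const_zero, add_zero] at hC2 hXC2 hodd
  rw [hodd] at hXC2
  have hwa : wa = wb := mul_right_cancel₀ (pow_ne_zero 2 hC1) (by linarith)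
  subst hwa
  refine ⟨rfl, ?_⟩
  rw [div_mul_eq_mul_div, eq_div_iff (by positivity)]
  linarith

/-- Endpoint weights of the Gegenbauer–Lobatto quadrature rule on `[a,b]`.
If the rule with endpoint nodes `a, b` and interior nodes `ξ i` (the φ-preimages of
the zeros of the degree-`m` polynomial `C` orthogonal w.r.t. `(1−t²)^{λ+1/2}`) is
exact for all polynomials of degree ≤ 2m+1 w.r.t. the weight `(1−φ(x)²)^{λ−1/2}`,
then `w_a = w_b = (b−a)/(4 C(1)²) · ∫_{-1}^1 C(t)² (1−t²)^{λ−1/2} dt`. -/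
theorem stmt_10 (a b : ℝ) (hab : a < b) (lam : ℝ) (hlam : -(1/2 : ℝ) < lam)
    (m : ℕ) (hm : 1 ≤ m)
    (φ : ℝ → ℝ) (hφ : ∀ x, φ x = (a + b - 2 * x) / (a - b))
    (C : Polynomial ℝ) (hCdeg : C.degree = (m : WithBot ℕ))
    (hCorth : ∀ q : Polynomial ℝ, q.degree < (m : WithBot ℕ) →
      ∫ t in (-1 : ℝ)..1, C.eval t * q.eval t * (1 - t ^ 2) ^ (lam + 1/2) = 0)
    (hC1 : C.eval 1 ≠ 0)
    (ξ : Fin m → ℝ) (hξ_mem : ∀ i, ξ i ∈ Set.Ioo a b)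
    (hξ_zero : ∀ i, C.eval (φ (ξ i)) = 0)
    (wa wb : ℝ) (w : Fin m → ℝ)
    (hexact : ∀ p : Polynomial ℝ, p.degree ≤ ((2 * m + 1 : ℕ) : WithBot ℕ) →
      ∫ x in a..b, p.eval x * (1 - (φ x) ^ 2) ^ (lam - 1/2) =
        wa * p.eval a + wb * p.eval b + ∑ i, w i * p.eval (ξ i)) :
    wa = wb ∧
      wb = (b - a) / (4 * (C.eval 1) ^ 2) *
        ∫ t in (-1 : ℝ)..1, (C.eval t) ^ 2 * (1 - t ^ 2) ^ (lam - 1/2) :=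
  stmt_10_general a b hab lam hlam m φ hφ C hCdeg hCorth hC1 ξ hξ_zero wa wb w hexact
end
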